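/- Let G = (V,E) be an infinite, connected, locally finite simple graph with origin o and lifted origin o'. For every (p,q) ∈ (0,1)², θ_G(p²) ≤ θ(p,q) ≤ θ_G(1 − (1−p)²), where θ_G(t) is the probability that the open cluster of o in Bernoulli(t) percolation on G is infinite and θ(p,q) is the annealed probability that the open cluster of o' in the random 2-lift is infinite. -/

import Mathlib

open MeasureTheory ProbabilityTheory

noncomputable def bernoulliMeasure (p : ℝ) : Measure Bool :=
  (ENNReal.ofReal p ⊓ 1) • Measure.dirac true + (1 - ENNReal.ofReal p ⊓ 1) • Measure.dirac false

/-- `μ` is the law of an i.i.d. family of Bernoulli(`p`) random variables indexed by `ι`. -/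
def IsBernoulliFamily {ι : Type*} (μ : Measure (ι → Bool)) (p : ℝ) : Prop :=
  IsProbabilityMeasure μ ∧
    iIndepFun (fun i ω => ω i) μ ∧
    ∀ i : ι, μ.map (fun ω => ω i) = _root_.bernoulliMeasure p

variable {V : Type*}

/-- The 2-lift of `G` determined by the switching configuration `η`. -/
def twoLift (G : SimpleGraph V) (η : Sym2 V → Bool) : SimpleGraph (V × Bool) where
  Adj x y := G.Adj x.1 y.1 ∧ y.2 = xor (η s(x.1, y.1)) x.2
  symm := by
    constructor
    rintro ⟨u, i⟩ ⟨v, j⟩ ⟨h, hj⟩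
    refine ⟨h.symm, ?_⟩
    simp only at hj ⊢
    subst hj
    rw [Sym2.eq_swap]
    simp [← Bool.xor_assoc]
  loopless := ⟨fun x h => G.loopless.irrefl x.1 h.1⟩

/-- The subgraph of `H` of edges open in the percolation configuration `ω`. -/
def openSubgraph {W : Type*} (H : SimpleGraph W) (ω : Sym2 W → Bool) : SimpleGraph W where
  Adj x y := H.Adj x y ∧ ω s(x, y) = true
  symm := ⟨fun x y h => ⟨h.1.symm, by rw [Sym2.eq_swap]; exact h.2⟩⟩
  loopless := ⟨fun x h => H.loopless.irrefl x h.1⟩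

/-- The open cluster of `x` in `H` for the percolation configuration `ω`. -/
def percCluster {W : Type*} (H : SimpleGraph W) (ω : Sym2 W → Bool) (x : W) : Set W :=
  {y | (openSubgraph H ω).Reachable x y}

/-- The annealed law on pairs (switching configuration, percolation configuration):
product of an i.i.d. Bernoulli(`q`) switching family and an i.i.d. Bernoulli(`p`)
percolation family. -/
def IsAnnealed {V : Type*} (μ : Measure ((Sym2 V → Bool) × (Sym2 (V × Bool) → Bool)))
    (q p : ℝ) : Prop :=
  ∃ (ν₁ : Measure (Sym2 V → Bool)) (ν₂ : Measure (Sym2 (V × Bool) → Bool)),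
    IsBernoulliFamily ν₁ q ∧ IsBernoulliFamily ν₂ p ∧ μ = ν₁.prod ν₂

/-- `θ(p,q)`: the annealed probability that the cluster of the lift `(o, false)` of the
origin `o` is infinite. -/
noncomputable def annealedTheta (G : SimpleGraph V) (o : V) (p q : ℝ) : ℝ :=
  sSup {t : ℝ | ∃ μ : Measure ((Sym2 V → Bool) × (Sym2 (V × Bool) → Bool)),
    IsAnnealed μ q p ∧
      t = (μ {z | (percCluster (twoLift G z.1) z.2 (o, false)).Infinite}).toReal}

/-- `p_c(q) = sup {p ∈ [0,1] : θ(p,q) = 0}`. -/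
noncomputable def annealedPc (G : SimpleGraph V) (o : V) (q : ℝ) : ℝ :=
  sSup {p : ℝ | p ∈ Set.Icc (0 : ℝ) 1 ∧ annealedTheta G o p q = 0}

/-- `G` is vertex-transitive. -/
def IsVertexTransitive (G : SimpleGraph V) : Prop :=
  ∀ u v : V, ∃ φ : G ≃g G, φ u = v

/-- `θ_G(t)`: the probability that the open cluster of `o` in Bernoulli(`t`) bond
percolation on the (deterministic) graph `H` is infinite. -/
noncomputable def graphThetaAt {W : Type*} (H : SimpleGraph W) (o : W) (t : ℝ) : ℝ :=
  sSup {x : ℝ | ∃ μ : Measure (Sym2 W → Bool), IsBernoulliFamily μ t ∧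
    x = (μ {ω | (percCluster H ω o).Infinite}).toReal}



open scoped ENNReal

/-! ### Weights -/

noncomputable def wgt (r : ℝ) : Bool → ℝ≥0∞ :=
  fun b => if b then (ENNReal.ofReal r ⊓ 1) else 1 - (ENNReal.ofReal r ⊓ 1)

lemma wgt_true_le_one (r : ℝ) : wgt r true ≤ 1 := inf_le_right

lemma wgt_false_eq (r : ℝ) : wgt r false = 1 - wgt r true := rfl

lemma wgt_add (r : ℝ) : wgt r true + wgt r false = 1 :=
  add_tsub_cancel_of_le (wgt_true_le_one r)

lemma wgt_le_one (r : ℝ) (b : Bool) : wgt r b ≤ 1 := by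
  cases b
  · exact tsub_le_self.trans le_rfl
  · exact wgt_true_le_one r

lemma wgt_ne_top (r : ℝ) (b : Bool) : wgt r b ≠ ⊤ :=
  fun h => by simpa [h] using (wgt_le_one r b)

lemma bernoulliMeasure_singleton (r : ℝ) (b : Bool) :
    bernoulliMeasure r {b} = wgt r b := by
  cases b <;>
    simp [_root_.bernoulliMeasure, wgt, Measure.dirac_apply' _ (measurableSet_singleton _),
      Set.indicator_apply]

/-- Cylinder formula for a measure on `ι → Bool`. -/
def HasCyl {ι : Type*} (ν : Measure (ι → Bool)) (r : ℝ) : Prop :=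
  ∀ (S : Finset ι) (b : ι → Bool), ν {ω | ∀ i ∈ S, ω i = b i} = ∏ i ∈ S, wgt r (b i)

lemma pin_eq_iInter {ι : Type*} (S : Finset ι) (b : ι → Bool) :
    {ω : ι → Bool | ∀ i ∈ S, ω i = b i} = ⋂ i ∈ S, (fun ω : ι → Bool => ω i) ⁻¹' {b i} := by
  ext ω; simp

lemma measurableSet_pin {ι : Type*} (S : Finset ι) (b : ι → Bool) :
    MeasurableSet {ω : ι → Bool | ∀ i ∈ S, ω i = b i} := by
  rw [pin_eq_iInter]
  exact MeasurableSet.biInter S.countable_toSet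
    (fun i _ => measurable_pi_apply i (measurableSet_singleton _))

lemma IsBernoulliFamily.hasCyl {ι : Type*} {ν : Measure (ι → Bool)} {r : ℝ}
    (h : IsBernoulliFamily ν r) : HasCyl ν r := by
  intro S b
  obtain ⟨hprob, hind, hmarg⟩ := h
  have h2 := hind.measure_inter_preimage_eq_mul S
    (sets := fun i => ({b i} : Set Bool)) (fun i _ => measurableSet_singleton _)
  rw [pin_eq_iInter, h2]
  refine Finset.prod_congr rfl fun i _ => ?_
  rw [← Measure.map_apply (measurable_pi_apply i) (measurableSet_singleton _), hmarg i,
    bernoulliMeasure_singleton]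

/-- Decomposition of an intersection of per-index finite unions of pairwise
disjoint sets, as a sum over `Finset.pi`. -/
lemma measure_biInter_biUnion {Ω ι : Type*} {κ : ι → Type*} [MeasurableSpace Ω]
    [DecidableEq ι] (μ : Measure Ω) (S : Finset ι) (T : ∀ i, Finset (κ i))
    (g : ∀ i, κ i → Set Ω)
    (hmeas : ∀ i c, MeasurableSet (g i c))
    (hdisj : ∀ i, ∀ c c', c ≠ c' → Disjoint (g i c) (g i c')) :
    μ (⋂ i ∈ S, ⋃ c ∈ T i, g i c)
      = ∑ ρ ∈ S.pi T, μ (⋂ x ∈ S.attach, g x.1 (ρ x.1 x.2)) := by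
  classical
  have hset : (⋂ i ∈ S, ⋃ c ∈ T i, g i c)
      = ⋃ ρ ∈ S.pi T, ⋂ x ∈ S.attach, g x.1 (ρ x.1 x.2) := by
    ext z
    constructor
    · intro hz
      have hz' : ∀ i (hi : i ∈ S), ∃ c, c ∈ T i ∧ z ∈ g i c := by
        intro i hi
        have := Set.mem_iInter₂.1 hz i hi
        rcases Set.mem_iUnion₂.1 this with ⟨c, hc, hcz⟩
        exact ⟨c, hc, hcz⟩
      choose c hcT hcz using hz'
      refine Set.mem_iUnion₂.2 ⟨c, Finset.mem_pi.2 hcT, ?_⟩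
      exact Set.mem_iInter₂.2 fun x _ => hcz x.1 x.2
    · intro hz
      rcases Set.mem_iUnion₂.1 hz with ⟨ρ, hρ, hzρ⟩
      refine Set.mem_iInter₂.2 fun i hi => ?_
      refine Set.mem_iUnion₂.2 ⟨ρ i hi, Finset.mem_pi.1 hρ i hi, ?_⟩
      exact Set.mem_iInter₂.1 hzρ ⟨i, hi⟩ (Finset.mem_attach _ _)
  rw [hset]
  refine measure_biUnion_finset ?_ ?_
  · intro ρ hρ ρ' hρ' hne
    have hex : ∃ i hi, ρ i hi ≠ ρ' i hi := by
      by_contra hcon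
      push_neg at hcon
      exact hne (funext fun i => funext fun hi => hcon i hi)
    obtain ⟨i, hi, hneq⟩ := hex
    refine Set.disjoint_left.2 fun z hz hz' => ?_
    have h1 := Set.mem_iInter₂.1 hz ⟨i, hi⟩ (Finset.mem_attach _ _)
    have h2 := Set.mem_iInter₂.1 hz' ⟨i, hi⟩ (Finset.mem_attach _ _)
    exact Set.disjoint_left.1 (hdisj i _ _ hneq) h1 h2
  · intro ρ _
    exact MeasurableSet.biInter (S.attach.countable_toSet)
      (fun x _ => hmeas x.1 (ρ x.1 x.2))

/-- Pinning at injectively chosen coordinates. -/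
lemma hasCyl_pin_inj {ι κ : Type*} {ν : Measure (ι → Bool)} {r : ℝ}
    (h : ∀ (S : Finset ι) (b : ι → Bool),
      ν {ω | ∀ i ∈ S, ω i = b i} = ∏ i ∈ S, wgt r (b i))
    (J : Finset κ) (gm : κ → ι) (cv : κ → Bool) (hinj : Set.InjOn gm J) :
    ν {ω | ∀ k ∈ J, ω (gm k) = cv k} = ∏ k ∈ J, wgt r (cv k) := by
  classical
  set b : ι → Bool := fun j =>
    if h' : ∃ k ∈ J, gm k = j then cv h'.choose else true with hb
  have hbk : ∀ k ∈ J, b (gm k) = cv k := by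
    intro k hk
    have hex : ∃ k' ∈ J, gm k' = gm k := ⟨k, hk, rfl⟩
    rw [hb]
    simp only [dif_pos hex]
    obtain ⟨hkJ, hkeq⟩ := hex.choose_spec
    rw [hinj hkJ hk hkeq]
  have hset : {ω : ι → Bool | ∀ k ∈ J, ω (gm k) = cv k}
      = {ω | ∀ j ∈ J.image gm, ω j = b j} := by
    ext ω
    constructor
    · intro hω j hj
      obtain ⟨k, hk, rfl⟩ := Finset.mem_image.1 hj
      rw [hω k hk, hbk k hk]
    · intro hω k hk
      rw [hω (gm k) (Finset.mem_image_of_mem gm hk), hbk k hk]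
  rw [hset, h (J.image gm) b,
    Finset.prod_image (fun x hx y hy hxy => hinj hx hy hxy)]
  exact Finset.prod_congr rfl fun k hk => by rw [hbk k hk]

section LemmaB
variable {ι : Type*} {ν : Measure (ι → Bool)} {r : ℝ}

lemma single_coord (h : HasCyl ν r) (i : ι) (A : Set Bool) :
    ν ((fun ω : ι → Bool => ω i) ⁻¹' A)
      = ∑ c ∈ (Set.toFinite A).toFinset, wgt r c := by
  classical
  have hset : (fun ω : ι → Bool => ω i) ⁻¹' A
      = ⋃ c ∈ (Set.toFinite A).toFinset, {ω : ι → Bool | ∀ j ∈ ({i} : Finset ι), ω j = c} := by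
    ext ω
    simp only [Set.mem_preimage, Set.mem_iUnion, Set.Finite.mem_toFinset, Finset.mem_singleton,
      Set.mem_setOf_eq]
    constructor
    · intro hA; exact ⟨ω i, hA, fun j hj => by rw [hj]⟩
    · rintro ⟨c, hc, hcω⟩; rw [hcω i rfl]; exact hc
  rw [hset, measure_biUnion_finset]
  · refine Finset.sum_congr rfl fun c _ => ?_
    have := h {i} (fun _ => c)
    simpa using this
  · intro c hc c' hc' hne
    refine Set.disjoint_left.2 fun ω hω hω' => ?_
    exact hne ((hω i (Finset.mem_singleton_self i)).symm.trans (hω' i (Finset.mem_singleton_self i)))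
  · exact fun c _ => measurableSet_pin {i} (fun _ => c)

lemma measurableSet_single (i : ι) (c : Bool) :
    MeasurableSet {ω : ι → Bool | ω i = c} := by
  have : {ω : ι → Bool | ω i = c} = {ω : ι → Bool | ∀ j ∈ ({i} : Finset ι), ω j = c} := by
    ext ω; simp
  rw [this]; exact measurableSet_pin {i} (fun _ => c)

lemma isBernoulliFamily_of_hasCyl (hprob : IsProbabilityMeasure ν) (h : HasCyl ν r) :
    IsBernoulliFamily ν r := by
  classical
  refine ⟨hprob, ?_, ?_⟩
  · rw [iIndepFun_iff_measure_inter_preimage_eq_mul]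
    intro S sets hsets
    -- decompose
    set T : ι → Finset Bool := fun i => (Set.toFinite (sets i)).toFinset with hT
    have hset : (⋂ i ∈ S, (fun ω : ι → Bool => ω i) ⁻¹' sets i)
        = ⋂ i ∈ S, ⋃ c ∈ T i, {ω : ι → Bool | ω i = c} := by
      refine Set.iInter₂_congr fun i hi => ?_
      ext ω
      simp only [Set.mem_preimage, Set.mem_iUnion, Set.Finite.mem_toFinset, Set.mem_setOf_eq, hT]
      constructor
      · intro hA; exact ⟨ω i, hA, rfl⟩
      · rintro ⟨c, hc, rfl⟩; exact hc
    rw [hset, measure_biInter_biUnion ν S T (fun i c => {ω : ι → Bool | ω i = c})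
      (fun i c => measurableSet_single i c)
      (fun i c c' hne => Set.disjoint_left.2 fun ω hω hω' => hne (hω.symm.trans hω'))]
    have hterm : ∀ ρ ∈ S.pi T,
        ν (⋂ x ∈ S.attach, {ω : ι → Bool | ω x.1 = ρ x.1 x.2})
          = ∏ x ∈ S.attach, wgt r (ρ x.1 x.2) := by
      intro ρ hρ
      set bb : ι → Bool := fun i => if hi : i ∈ S then ρ i hi else true with hbb
      have hset2 : (⋂ x ∈ S.attach, {ω : ι → Bool | ω x.1 = ρ x.1 x.2})
          = {ω : ι → Bool | ∀ i ∈ S, ω i = bb i} := by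
        ext ω
        constructor
        · intro hω i hi
          have := Set.mem_iInter₂.1 hω ⟨i, hi⟩ (Finset.mem_attach _ _)
          rw [this, hbb]
          simp only [dif_pos hi]
        · intro hω
          refine Set.mem_iInter₂.2 fun x _ => ?_
          show ω x.1 = ρ x.1 x.2
          rw [hω x.1 x.2, hbb]
          simp only [dif_pos x.2]
      rw [hset2, h S bb]
      rw [← Finset.prod_attach S (fun i => wgt r (bb i))]
      refine Finset.prod_congr rfl fun x _ => ?_
      rw [hbb]; simp only [dif_pos x.2]
    rw [Finset.sum_congr rfl hterm]
    have hrhs : ∀ i ∈ S, ν ((fun ω : ι → Bool => ω i) ⁻¹' sets i) = ∑ c ∈ T i, wgt r c :=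
      fun i _ => single_coord h i (sets i)
    rw [Finset.prod_congr rfl hrhs, Finset.prod_sum]
  · intro i
    refine Measure.ext fun A hA => ?_
    rw [Measure.map_apply (measurable_pi_apply i) hA, single_coord h i A]
    have hfin : (Set.toFinite A).toFinset = Finset.univ.filter (fun c => c ∈ A) := by
      ext c
      simp only [Set.Finite.mem_toFinset, Finset.mem_filter, Finset.mem_univ, true_and]
    rw [hfin, Finset.sum_filter, Fintype.sum_bool]
    have hbm : ∀ s : Set Bool, MeasurableSet s → bernoulliMeasure r s
        = (if true ∈ s then wgt r true else 0) + (if false ∈ s then wgt r false else 0) := by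
      intro s hs
      rw [show bernoulliMeasure r s
          = (ENNReal.ofReal r ⊓ 1) * Measure.dirac true s
            + (1 - ENNReal.ofReal r ⊓ 1) * Measure.dirac false s from rfl]
      rw [Measure.dirac_apply' _ hs, Measure.dirac_apply' _ hs]
      simp only [Set.indicator_apply, wgt, Pi.one_apply]
      by_cases h1 : true ∈ s <;> by_cases h2 : false ∈ s <;> simp [h1, h2]
    rw [hbm A hA]
end LemmaB

section Unique
variable {ι : Type*}

open scoped Classical in
lemma cyl_measure_eq {ν : Measure (ι → Bool)} {r : ℝ} (h : HasCyl ν r)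
    (S : Finset ι) (B : Set (∀ i : S, Bool)) :
    ν (cylinder S B)
      = ∑ b ∈ (Set.toFinite B).toFinset,
          ∏ i ∈ S, wgt r (if hi : i ∈ S then b ⟨i, hi⟩ else true) := by
  classical
  have hset : cylinder S B = ⋃ b ∈ (Set.toFinite B).toFinset,
      {ω : ι → Bool | ∀ i ∈ S, ω i = if hi : i ∈ S then b ⟨i, hi⟩ else true} := by
    ext ω
    simp only [mem_cylinder, Set.mem_iUnion, Set.Finite.mem_toFinset, Set.mem_setOf_eq]
    constructor
    · intro hB
      refine ⟨S.restrict ω, hB, fun i hi => ?_⟩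
      simp only [dif_pos hi]
      rfl
    · rintro ⟨b, hb, hω⟩
      have : S.restrict ω = b := by
        funext j
        have := hω j.1 j.2
        simpa only [Finset.restrict, dif_pos j.2] using this
      rw [this]; exact hb
  rw [hset, measure_biUnion_finset]
  · exact Finset.sum_congr rfl fun b _ => h S _
  · intro b hb b' hb' hne
    have : ∃ j : S, b j ≠ b' j := by
      by_contra hcon
      push_neg at hcon
      exact hne (funext fun j => hcon j)
    obtain ⟨j, hj⟩ := this
    refine Set.disjoint_left.2 fun ω hω hω' => ?_
    have h1 := hω j.1 j.2
    have h2 := hω' j.1 j.2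
    rw [dif_pos j.2] at h1 h2
    exact hj (h1.symm.trans h2)
  · exact fun b _ => measurableSet_pin S _

lemma hasCyl_unique {ν ν' : Measure (ι → Bool)} {r : ℝ}
    [IsProbabilityMeasure ν] [IsProbabilityMeasure ν']
    (h : HasCyl ν r) (h' : HasCyl ν' r) : ν = ν' := by
  refine ext_of_generate_finite (measurableCylinders (fun _ : ι => Bool))
    generateFrom_measurableCylinders.symm isPiSystem_measurableCylinders ?_ (by simp)
  intro s hs
  obtain ⟨S, B, hB, rfl⟩ := (mem_measurableCylinders _).1 hs
  rw [cyl_measure_eq h, cyl_measure_eq h']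
end Unique

section Digits
variable (r : ℝ)

noncomputable def rstep (x : ℝ) : ℝ := if x < r then r⁻¹ * x else (1 - r)⁻¹ * (x - r)

noncomputable def rdig (n : ℕ) (x : ℝ) : Bool := decide ((rstep r)^[n] x < r)

lemma measurable_rstep : Measurable (rstep r) := by
  unfold rstep
  exact Measurable.ite measurableSet_Iio (measurable_id.const_mul _)
    ((measurable_id.sub_const _).const_mul _)

lemma measurable_rdig (n : ℕ) : Measurable (rdig r n) := by
  have h1 : Measurable ((rstep r)^[n]) := (measurable_rstep r).iterate n
  have h2 : (fun y : ℝ => decide (y < r)) = fun y => if y < r then true else false := by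
    funext y; by_cases h : y < r <;> simp [h]
  have : rdig r n = (fun y : ℝ => decide (y < r)) ∘ (rstep r)^[n] := rfl
  rw [this, h2]
  exact (Measurable.ite measurableSet_Iio measurable_const measurable_const).comp h1

lemma rdig_succ (n : ℕ) (x : ℝ) : rdig r (n + 1) x = rdig r n (rstep r x) := by
  simp only [rdig, Function.iterate_succ_apply]
  rfl

variable {r}

lemma wgt_true_eq (hr1 : r ≤ 1) : wgt r true = ENNReal.ofReal r := by
  simp only [wgt, if_true]
  exact inf_eq_left.2 (ENNReal.ofReal_le_one.2 hr1)

lemma wgt_false_eq' (hr0 : 0 ≤ r) (hr1 : r ≤ 1) : wgt r false = ENNReal.ofReal (1 - r) := by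
  simp only [wgt, if_false, Bool.false_eq_true]
  rw [inf_eq_left.2 (ENNReal.ofReal_le_one.2 hr1), ENNReal.ofReal_sub _ hr0,
    ENNReal.ofReal_one]

lemma rdig_range_cyl (hr0 : 0 < r) (hr1 : r < 1) :
    ∀ (n : ℕ) (b : ℕ → Bool),
      volume {x : ℝ | x ∈ Set.Ico (0:ℝ) 1 ∧ ∀ i ∈ Finset.range n, rdig r i x = b i}
        = ∏ i ∈ Finset.range n, wgt r (b i) := by
  intro n
  induction n with
  | zero =>
    intro b
    simp only [Finset.range_zero, Finset.notMem_empty, false_implies, implies_true, and_true,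
      Finset.prod_empty]
    rw [show {x : ℝ | x ∈ Set.Ico (0:ℝ) 1} = Set.Ico (0:ℝ) 1 from rfl, Real.volume_Ico]
    norm_num
  | succ n ih =>
    intro b
    have hu : (0:ℝ) < 1 - r := by linarith
    have key : ∀ x : ℝ,
        (x ∈ Set.Ico (0:ℝ) 1 ∧ ∀ i ∈ Finset.range (n+1), rdig r i x = b i)
          ↔ (rdig r 0 x = b 0 ∧ x ∈ Set.Ico (0:ℝ) 1 ∧
              ∀ i ∈ Finset.range n, rdig r i (rstep r x) = b (i+1)) := by
      intro x
      constructor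
      · rintro ⟨hx, hd⟩
        refine ⟨hd 0 (by simp), hx, fun i hi => ?_⟩
        rw [← rdig_succ]
        exact hd (i+1) (by simpa using Finset.mem_range.1 hi)
      · rintro ⟨h0, hx, hd⟩
        refine ⟨hx, fun i hi => ?_⟩
        match i with
        | 0 => exact h0
        | (j+1) =>
          rw [rdig_succ]
          exact hd j (by simpa using Finset.mem_range.1 hi)
    have hprod : ∏ i ∈ Finset.range (n+1), wgt r (b i)
        = wgt r (b 0) * ∏ i ∈ Finset.range n, wgt r (b (i+1)) := by
      rw [Finset.prod_range_succ' (fun i => wgt r (b i)) n, mul_comm]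
    cases hb0 : b 0 with
    | true =>
      have hset : {x : ℝ | x ∈ Set.Ico (0:ℝ) 1 ∧ ∀ i ∈ Finset.range (n+1), rdig r i x = b i}
          = (fun x => r⁻¹ * x) ⁻¹'
            {y : ℝ | y ∈ Set.Ico (0:ℝ) 1 ∧ ∀ i ∈ Finset.range n, rdig r i y = b (i+1)} := by
        ext x
        rw [Set.mem_setOf_eq, key x]
        simp only [Set.mem_preimage, Set.mem_setOf_eq, hb0]
        constructor
        · rintro ⟨h0, ⟨hx0, _⟩, hd⟩
          have hxr : x < r := by simpa [rdig] using of_decide_eq_true h0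
          have hstep : rstep r x = r⁻¹ * x := if_pos hxr
          refine ⟨⟨by positivity, ?_⟩, fun i hi => by rw [← hstep]; exact hd i hi⟩
          have := mul_lt_mul_of_pos_left hxr (inv_pos.2 hr0)
          rwa [inv_mul_cancel₀ (ne_of_gt hr0)] at this
        · rintro ⟨⟨hy0, hy1⟩, hd⟩
          have hxx : x = r * (r⁻¹ * x) := by field_simp
          have hx0 : 0 ≤ x := by nlinarith
          have hxr : x < r := by nlinarith
          have hstep : rstep r x = r⁻¹ * x := if_pos hxr
          have h0 : rdig r 0 x = true := by simp [rdig, hxr]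
          exact ⟨h0, ⟨hx0, by linarith⟩, fun i hi => by rw [hstep]; exact hd i hi⟩
      rw [hset, Real.volume_preimage_mul_left (inv_ne_zero (ne_of_gt hr0)), ih (fun i => b (i+1)),
        hprod, hb0, wgt_true_eq hr1.le]
      congr 1
      rw [inv_inv, abs_of_pos hr0]
    | false =>
      have hset : {x : ℝ | x ∈ Set.Ico (0:ℝ) 1 ∧ ∀ i ∈ Finset.range (n+1), rdig r i x = b i}
          = (fun x : ℝ => -r + x) ⁻¹' ((fun y => (1-r)⁻¹ * y) ⁻¹'
            {y : ℝ | y ∈ Set.Ico (0:ℝ) 1 ∧ ∀ i ∈ Finset.range n, rdig r i y = b (i+1)}) := by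
        ext x
        rw [Set.mem_setOf_eq, key x]
        simp only [Set.mem_preimage, Set.mem_setOf_eq, hb0, neg_add_eq_sub]
        constructor
        · rintro ⟨h0, ⟨hx0, hx1⟩, hd⟩
          have hxr : ¬ x < r := by simpa [rdig] using of_decide_eq_false h0
          push_neg at hxr
          have hstep : rstep r x = (1-r)⁻¹ * (x - r) := if_neg (not_lt.2 hxr)
          refine ⟨⟨mul_nonneg (le_of_lt (inv_pos.2 hu)) (by linarith), ?_⟩,
            fun i hi => by rw [← hstep]; exact hd i hi⟩
          have h1 : x - r < 1 - r := by linarith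
          have := mul_lt_mul_of_pos_left h1 (inv_pos.2 hu)
          rwa [inv_mul_cancel₀ (ne_of_gt hu)] at this
        · rintro ⟨⟨hy0, hy1⟩, hd⟩
          have hxx : x - r = (1-r) * ((1-r)⁻¹ * (x - r)) := by field_simp
          have hxr : r ≤ x := by nlinarith
          have hx1 : x < 1 := by nlinarith
          have hstep : rstep r x = (1-r)⁻¹ * (x - r) := if_neg (not_lt.2 hxr)
          have h0 : rdig r 0 x = false := by simp [rdig, not_lt.2 hxr]
          exact ⟨h0, ⟨by linarith, hx1⟩, fun i hi => by rw [hstep]; exact hd i hi⟩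
      rw [hset]
      rw [show ((fun x : ℝ => -r + x) ⁻¹' ((fun y => (1-r)⁻¹ * y) ⁻¹'
            {y : ℝ | y ∈ Set.Ico (0:ℝ) 1 ∧ ∀ i ∈ Finset.range n, rdig r i y = b (i+1)}))
          = (fun x : ℝ => -r + x) ⁻¹' ((fun y => (1-r)⁻¹ * y) ⁻¹'
            {y : ℝ | y ∈ Set.Ico (0:ℝ) 1 ∧ ∀ i ∈ Finset.range n, rdig r i y = b (i+1)}) from rfl]
      rw [measure_preimage_add volume (-r) _,
        Real.volume_preimage_mul_left (inv_ne_zero (ne_of_gt hu)), ih (fun i => b (i+1)),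
        hprod, hb0, wgt_false_eq' hr0.le hr1.le]
      congr 1
      rw [inv_inv, abs_of_pos hu]

end Digits

section Existence
variable {r : ℝ}

noncomputable def digitsFun (r : ℝ) : ℝ → (ℕ → Bool) := fun x n => rdig r n x

lemma measurable_digitsFun (r : ℝ) : Measurable (digitsFun r) :=
  measurable_pi_lambda _ (fun n => measurable_rdig r n)

noncomputable def natBern (r : ℝ) : Measure (ℕ → Bool) :=
  (volume.restrict (Set.Ico (0:ℝ) 1)).map (digitsFun r)

instance : IsProbabilityMeasure (volume.restrict (Set.Ico (0:ℝ) 1)) := by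
  constructor
  rw [Measure.restrict_apply MeasurableSet.univ, Set.univ_inter, Real.volume_Ico]
  norm_num

instance : IsProbabilityMeasure (natBern r) :=
  Measure.isProbabilityMeasure_map (measurable_digitsFun r).aemeasurable

lemma natBern_hasCyl (hr0 : 0 < r) (hr1 : r < 1) : HasCyl (natBern r) r := by
  classical
  intro S b
  rw [natBern, Measure.map_apply (measurable_digitsFun r) (measurableSet_pin S b),
    Measure.restrict_apply ((measurable_digitsFun r) (measurableSet_pin S b))]
  obtain ⟨n, hSn⟩ := S.exists_nat_subset_range
  set D : Finset ℕ := Finset.range n \ S with hD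
  have hDdisj : Disjoint S D := Finset.disjoint_sdiff
  have hDun : S ∪ D = Finset.range n := Finset.union_sdiff_of_subset hSn
  -- extension of b by c on D
  set ext : (∀ i ∈ D, Bool) → ℕ → Bool :=
    fun c i => if h : i ∈ D then c i h else b i with hext
  have hset : (digitsFun r ⁻¹' {ω | ∀ i ∈ S, ω i = b i} ∩ Set.Ico (0:ℝ) 1)
      = ⋃ c ∈ D.pi (fun _ => (Finset.univ : Finset Bool)),
          {x : ℝ | x ∈ Set.Ico (0:ℝ) 1 ∧ ∀ i ∈ Finset.range n, rdig r i x = ext c i} := by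
    ext x
    simp only [Set.mem_inter_iff, Set.mem_preimage, Set.mem_setOf_eq, Set.mem_iUnion]
    constructor
    · rintro ⟨hdig, hx⟩
      refine ⟨fun i _ => rdig r i x, Finset.mem_pi.2 fun i hi => Finset.mem_univ _, hx,
        fun i hi => ?_⟩
      by_cases hiD : i ∈ D
      · simp only [hext, dif_pos hiD]
      · have hiS : i ∈ S := by
          rcases Finset.mem_union.1 (hDun ▸ hi) with h | h
          · exact h
          · exact absurd h hiD
        simp only [hext, dif_neg hiD]
        exact hdig i hiS
    · rintro ⟨c, hc, hx, hdig⟩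
      refine ⟨fun i hi => ?_, hx⟩
      have hiR : i ∈ Finset.range n := hSn hi
      have hiD : i ∉ D := fun h => (Finset.mem_sdiff.1 h).2 hi
      have := hdig i hiR
      simpa only [hext, dif_neg hiD, digitsFun] using this
  rw [hset, measure_biUnion_finset]
  · have hterm : ∀ c ∈ D.pi (fun _ => (Finset.univ : Finset Bool)),
        volume {x : ℝ | x ∈ Set.Ico (0:ℝ) 1 ∧ ∀ i ∈ Finset.range n, rdig r i x = ext c i}
          = (∏ i ∈ S, wgt r (b i)) * ∏ x ∈ D.attach, wgt r (c x.1 x.2) := by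
      intro c hc
      rw [rdig_range_cyl hr0 hr1 n (ext c), ← hDun, Finset.prod_union hDdisj]
      congr 1
      · refine Finset.prod_congr rfl fun i hi => ?_
        have hiD : i ∉ D := fun h => (Finset.mem_sdiff.1 h).2 hi
        simp only [hext, dif_neg hiD]
      · rw [← Finset.prod_attach D (fun i => wgt r (ext c i))]
        refine Finset.prod_congr rfl fun x _ => ?_
        simp only [hext, dif_pos x.2]
    rw [Finset.sum_congr rfl hterm, ← Finset.mul_sum,
      ← Finset.prod_sum D (fun _ => (Finset.univ : Finset Bool)) (fun _ t => wgt r t)]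
    have : ∀ i ∈ D, ∑ t ∈ (Finset.univ : Finset Bool), wgt r t = 1 := by
      intro i _
      rw [Fintype.sum_bool, wgt_add]
    rw [Finset.prod_congr rfl this, Finset.prod_const_one, mul_one]
  · intro c hc c' hc' hne
    have hex : ∃ i hi, c i hi ≠ c' i hi := by
      by_contra hcon
      push_neg at hcon
      exact hne (funext fun i => funext fun hi => hcon i hi)
    obtain ⟨i, hi, hneq⟩ := hex
    have hiR : i ∈ Finset.range n := by
      rw [← hDun]; exact Finset.mem_union_right _ hi
    refine Set.disjoint_left.2 fun x hx hx' => ?_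
    have h1 := hx.2 i hiR
    have h2 := hx'.2 i hiR
    simp only [hext, dif_pos hi] at h1 h2
    exact hneq (h1.symm.trans h2)
  · intro c _
    have hseteq : {x : ℝ | x ∈ Set.Ico (0:ℝ) 1 ∧ ∀ i ∈ Finset.range n, rdig r i x = ext c i}
        = Set.Ico (0:ℝ) 1 ∩ ⋂ i ∈ Finset.range n, rdig r i ⁻¹' {ext c i} := by
      ext x
      simp only [Set.mem_setOf_eq, Set.mem_inter_iff, Set.mem_iInter, Set.mem_preimage,
        Set.mem_singleton_iff]
    rw [hseteq]
    exact measurableSet_Ico.inter (MeasurableSet.biInter (Finset.range n).countable_toSet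
      (fun i _ => measurable_rdig r i (measurableSet_singleton _)))

lemma exists_isBernoulliFamily (ι : Type*) [Countable ι] [Infinite ι]
    (hr0 : 0 < r) (hr1 : r < 1) :
    ∃ ν : Measure (ι → Bool), IsBernoulliFamily ν r := by
  classical
  obtain ⟨e⟩ : Nonempty (ι ≃ ℕ) := nonempty_equiv_of_countable
  set g : (ℕ → Bool) → (ι → Bool) := fun ω i => ω (e i) with hg
  have hgm : Measurable g := measurable_pi_lambda _ (fun i => measurable_pi_apply (e i))
  refine ⟨(natBern r).map g, ?_⟩
  haveI : IsProbabilityMeasure ((natBern r).map g) :=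
    Measure.isProbabilityMeasure_map hgm.aemeasurable
  refine isBernoulliFamily_of_hasCyl inferInstance ?_
  intro S b
  rw [Measure.map_apply hgm (measurableSet_pin S b)]
  have hset : g ⁻¹' {ω | ∀ i ∈ S, ω i = b i}
      = {ω : ℕ → Bool | ∀ j ∈ S.image e, ω j = b (e.symm j)} := by
    ext ω
    simp only [Set.mem_preimage, Set.mem_setOf_eq, hg]
    constructor
    · intro hω j hj
      obtain ⟨i, hi, rfl⟩ := Finset.mem_image.1 hj
      rw [hω i hi, Equiv.symm_apply_apply]
    · intro hω i hi
      have := hω (e i) (Finset.mem_image_of_mem e hi)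
      rwa [Equiv.symm_apply_apply] at this
  rw [hset, natBern_hasCyl hr0 hr1 (S.image e) (fun j => b (e.symm j)),
    Finset.prod_image (fun x _ y _ h => e.injective h)]
  exact Finset.prod_congr rfl fun i _ => by rw [Equiv.symm_apply_apply]

end Existence

section Master
variable {ι₁ ι₂ : Type*}

def liftMap (a₁ a₂ : Bool → ι₁ → ι₂) (op : Bool → Bool → Bool)
    (z : (ι₁ → Bool) × (ι₂ → Bool)) : ι₁ → Bool :=
  fun e => op (z.2 (a₁ (z.1 e) e)) (z.2 (a₂ (z.1 e) e))

lemma measurable_liftMap (a₁ a₂ : Bool → ι₁ → ι₂) (op : Bool → Bool → Bool) :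
    Measurable (liftMap a₁ a₂ op) := by
  apply measurable_pi_lambda
  intro e
  have heq : (fun z : (ι₁ → Bool) × (ι₂ → Bool) => liftMap a₁ a₂ op z e)
      = fun z => if z.1 e = true then op (z.2 (a₁ true e)) (z.2 (a₂ true e))
          else op (z.2 (a₁ false e)) (z.2 (a₂ false e)) := by
    funext z
    rcases h : z.1 e with _ | _ <;> simp [liftMap, h]
  rw [heq]
  have hfe : Measurable (fun z : (ι₁ → Bool) × (ι₂ → Bool) => z.1 e) :=
    (measurable_pi_apply e).comp measurable_fst
  have hcond : MeasurableSet {z : (ι₁ → Bool) × (ι₂ → Bool) | z.1 e = true} :=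
    hfe (measurableSet_singleton true)
  have hbr : ∀ j k : ι₂, Measurable
      (fun z : (ι₁ → Bool) × (ι₂ → Bool) => op (z.2 j) (z.2 k)) := by
    intro j k
    have hj : Measurable (fun z : (ι₁ → Bool) × (ι₂ → Bool) => z.2 j) :=
      (measurable_pi_apply j).comp measurable_snd
    have hk : Measurable (fun z : (ι₁ → Bool) × (ι₂ → Bool) => z.2 k) :=
      (measurable_pi_apply k).comp measurable_snd
    exact (measurable_of_countable (fun y : Bool × Bool => op y.1 y.2)).comp (hj.prodMk hk)
  exact Measurable.ite hcond (hbr _ _) (hbr _ _)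

lemma hop_of_true {p r' : ℝ} (op : Bool → Bool → Bool)
    (htrue : (∑ y ∈ Finset.univ.filter (fun y : Bool × Bool => op y.1 y.2 = true),
        wgt p y.1 * wgt p y.2) = wgt r' true) :
    ∀ b, (∑ y ∈ Finset.univ.filter (fun y : Bool × Bool => op y.1 y.2 = b),
        wgt p y.1 * wgt p y.2) = wgt r' b := by
  have htot : (∑ y : Bool × Bool, wgt p y.1 * wgt p y.2) = 1 := by
    rw [Fintype.sum_prod_type]
    have : ∀ x : Bool, (∑ y : Bool, wgt p x * wgt p y) = wgt p x := by
      intro x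
      rw [← Finset.mul_sum, Fintype.sum_bool, wgt_add, mul_one]
    rw [Fintype.sum_bool, this, this, wgt_add]
  intro b
  cases b
  · have hsplit := Finset.sum_filter_add_sum_filter_not Finset.univ
      (fun y : Bool × Bool => op y.1 y.2 = true) (fun y => wgt p y.1 * wgt p y.2)
    have hcongr : Finset.univ.filter (fun y : Bool × Bool => ¬ (op y.1 y.2 = true))
        = Finset.univ.filter (fun y : Bool × Bool => op y.1 y.2 = false) := by
      refine Finset.filter_congr fun y _ => ?_
      cases h : op y.1 y.2 <;> simp [h]
    rw [hcongr, htot, htrue] at hsplit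
    have h2 : (∑ y ∈ Finset.univ.filter (fun y : Bool × Bool => op y.1 y.2 = false),
        wgt p y.1 * wgt p y.2) + wgt r' true = 1 := by
      rw [add_comm]; exact hsplit
    rw [show wgt r' false = 1 - wgt r' true from rfl]
    exact ENNReal.eq_sub_of_add_eq (wgt_ne_top r' true) h2
  · exact htrue

lemma hop_and {p : ℝ} (hp0 : 0 ≤ p) (hp1 : p ≤ 1) :
    (∑ y ∈ Finset.univ.filter (fun y : Bool × Bool => (y.1 && y.2) = true),
        wgt p y.1 * wgt p y.2) = wgt (p^2) true := by
  have hfilter : Finset.univ.filter (fun y : Bool × Bool => (y.1 && y.2) = true)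
      = {(true, true)} := by decide
  rw [hfilter, Finset.sum_singleton, wgt_true_eq hp1,
    wgt_true_eq (by nlinarith : p^2 ≤ 1), pow_two, ENNReal.ofReal_mul hp0]

lemma hop_or {p : ℝ} (hp0 : 0 ≤ p) (hp1 : p ≤ 1) :
    (∑ y ∈ Finset.univ.filter (fun y : Bool × Bool => (y.1 || y.2) = true),
        wgt p y.1 * wgt p y.2) = wgt (1 - (1-p)^2) true := by
  have hfilter : Finset.univ.filter (fun y : Bool × Bool => (y.1 || y.2) = true)
      = {(true, true), (true, false), (false, true)} := by decide
  rw [hfilter]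
  rw [show ({(true, true), (true, false), (false, true)} : Finset (Bool × Bool)).sum
        (fun y => wgt p y.1 * wgt p y.2)
      = wgt p true * wgt p true + (wgt p true * wgt p false + wgt p false * wgt p true) by
    rw [Finset.sum_insert (by decide), Finset.sum_insert (by decide), Finset.sum_singleton]]
  rw [wgt_true_eq hp1, wgt_false_eq' hp0 hp1,
    wgt_true_eq (by nlinarith : 1 - (1-p)^2 ≤ 1)]
  rw [← ENNReal.ofReal_mul hp0, ← ENNReal.ofReal_mul hp0,
    ← ENNReal.ofReal_mul (by linarith : (0:ℝ) ≤ 1 - p),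
    ← ENNReal.ofReal_add (by nlinarith) (by nlinarith),
    ← ENNReal.ofReal_add (by nlinarith) (by nlinarith)]
  congr 1
  ring

lemma isBernoulliFamily_liftMap
    {ν₁ : Measure (ι₁ → Bool)} {ν₂ : Measure (ι₂ → Bool)} {q p r' : ℝ}
    (h₁ : IsBernoulliFamily ν₁ q) (h₂ : IsBernoulliFamily ν₂ p)
    (a₁ a₂ : Bool → ι₁ → ι₂) (op : Bool → Bool → Bool)
    (hne : ∀ c e, a₁ c e ≠ a₂ c e)
    (hsep : ∀ (c c' : Bool) (e e' : ι₁), e ≠ e' →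
      a₁ c e ≠ a₁ c' e' ∧ a₁ c e ≠ a₂ c' e' ∧ a₂ c e ≠ a₁ c' e' ∧ a₂ c e ≠ a₂ c' e')
    (hop : ∀ b, (∑ y ∈ Finset.univ.filter (fun y : Bool × Bool => op y.1 y.2 = b),
        wgt p y.1 * wgt p y.2) = wgt r' b) :
    IsBernoulliFamily ((ν₁.prod ν₂).map (liftMap a₁ a₂ op)) r' := by
  classical
  haveI := h₁.1
  haveI := h₂.1
  have hc₁ := h₁.hasCyl
  have hc₂ := h₂.hasCyl
  have hFm : Measurable (liftMap a₁ a₂ op) := measurable_liftMap a₁ a₂ op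
  haveI : IsProbabilityMeasure ((ν₁.prod ν₂).map (liftMap a₁ a₂ op)) :=
    Measure.isProbabilityMeasure_map hFm.aemeasurable
  refine isBernoulliFamily_of_hasCyl inferInstance ?_
  intro S b
  rw [Measure.map_apply hFm (measurableSet_pin S b)]
  set T : ι₁ → Finset (Bool × Bool × Bool) :=
    fun e => Finset.univ.filter (fun y => op y.2.1 y.2.2 = b e) with hT
  set g : ι₁ → (Bool × Bool × Bool) → Set ((ι₁ → Bool) × (ι₂ → Bool)) :=
    fun e y => {z | z.1 e = y.1 ∧ z.2 (a₁ y.1 e) = y.2.1 ∧ z.2 (a₂ y.1 e) = y.2.2} with hg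
  have hset : liftMap a₁ a₂ op ⁻¹' {ω | ∀ e ∈ S, ω e = b e} = ⋂ e ∈ S, ⋃ y ∈ T e, g e y := by
    ext z
    simp only [Set.mem_preimage, Set.mem_setOf_eq]
    constructor
    · intro hz
      refine Set.mem_iInter₂.2 fun e he => ?_
      refine Set.mem_iUnion₂.2
        ⟨(z.1 e, z.2 (a₁ (z.1 e) e), z.2 (a₂ (z.1 e) e)), ?_, ?_⟩
      · simp only [hT, Finset.mem_filter, Finset.mem_univ, true_and]
        exact hz e he
      · simp [hg]
    · intro hz e he
      rcases Set.mem_iUnion₂.1 (Set.mem_iInter₂.1 hz e he) with ⟨y, hyT, hyz⟩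
      simp only [hg, Set.mem_setOf_eq] at hyz
      obtain ⟨hy1, hy2, hy3⟩ := hyz
      simp only [hT, Finset.mem_filter, Finset.mem_univ, true_and] at hyT
      show op (z.2 (a₁ (z.1 e) e)) (z.2 (a₂ (z.1 e) e)) = b e
      rw [hy1, hy2, hy3]
      exact hyT
  rw [hset, measure_biInter_biUnion (ν₁.prod ν₂) S T g
    (fun e y => by
      have : g e y = ((fun z : (ι₁ → Bool) × (ι₂ → Bool) => z.1 e) ⁻¹' {y.1})
          ∩ (((fun z : (ι₁ → Bool) × (ι₂ → Bool) => z.2 (a₁ y.1 e)) ⁻¹' {y.2.1})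
            ∩ ((fun z : (ι₁ → Bool) × (ι₂ → Bool) => z.2 (a₂ y.1 e)) ⁻¹' {y.2.2})) := by
        ext z
        simp only [hg, Set.mem_setOf_eq, Set.mem_inter_iff, Set.mem_preimage,
          Set.mem_singleton_iff]
      rw [this]
      have m1 : Measurable (fun z : (ι₁ → Bool) × (ι₂ → Bool) => z.1 e) :=
        (measurable_pi_apply e).comp measurable_fst
      have m2 : Measurable (fun z : (ι₁ → Bool) × (ι₂ → Bool) => z.2 (a₁ y.1 e)) :=
        (measurable_pi_apply _).comp measurable_snd
      have m3 : Measurable (fun z : (ι₁ → Bool) × (ι₂ → Bool) => z.2 (a₂ y.1 e)) :=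
        (measurable_pi_apply _).comp measurable_snd
      exact (m1 (measurableSet_singleton _)).inter
        ((m2 (measurableSet_singleton _)).inter (m3 (measurableSet_singleton _))))
    (fun e y y' hyy' => by
      refine Set.disjoint_left.2 fun z hz hz' => ?_
      simp only [hg, Set.mem_setOf_eq] at hz hz'
      apply hyy'
      obtain ⟨h1, h2, h3⟩ := hz
      obtain ⟨h1', h2', h3'⟩ := hz'
      have hc : y.1 = y'.1 := h1.symm.trans h1'
      refine Prod.ext hc (Prod.ext ?_ ?_)
      · rw [← h2, ← h2', hc]
      · rw [← h3, ← h3', hc])]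
  have hterm : ∀ ρ ∈ S.pi T,
      (ν₁.prod ν₂) (⋂ x ∈ S.attach, g x.1 (ρ x.1 x.2))
        = ∏ x ∈ S.attach,
            (wgt q (ρ x.1 x.2).1 * (wgt p (ρ x.1 x.2).2.1 * wgt p (ρ x.1 x.2).2.2)) := by
    intro ρ hρ
    set ρb : ι₁ → Bool × Bool × Bool :=
      fun e => if he : e ∈ S then ρ e he else (true, true, true) with hρb
    set gm : ι₁ × Bool → ι₂ :=
      fun k => if k.2 then a₁ (ρb k.1).1 k.1 else a₂ (ρb k.1).1 k.1 with hgm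
    set cv : ι₁ × Bool → Bool :=
      fun k => if k.2 then (ρb k.1).2.1 else (ρb k.1).2.2 with hcv
    have hrect : (⋂ x ∈ S.attach, g x.1 (ρ x.1 x.2))
        = {η : ι₁ → Bool | ∀ e ∈ S, η e = (ρb e).1} ×ˢ
          {ω : ι₂ → Bool | ∀ k ∈ S ×ˢ (Finset.univ : Finset Bool), ω (gm k) = cv k} := by
      ext z
      constructor
      · intro hz
        have hz' : ∀ e (he : e ∈ S), z ∈ g e (ρ e he) :=
          fun e he => Set.mem_iInter₂.1 hz ⟨e, he⟩ (Finset.mem_attach _ _)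
        constructor
        · intro e he
          simp only [hρb, dif_pos he]
          exact (hz' e he).1
        · rintro ⟨e, m⟩ hk
          obtain ⟨he, -⟩ := Finset.mem_product.1 hk
          have h3 := hz' e he
          simp only [hg, Set.mem_setOf_eq] at h3
          cases m
          · simp only [hgm, hcv, if_false, Bool.false_eq_true, hρb, dif_pos he]
            exact h3.2.2
          · simp only [hgm, hcv, if_true, hρb, dif_pos he]
            exact h3.2.1
      · rintro ⟨h1, h2⟩
        refine Set.mem_iInter₂.2 fun x _ => ?_
        simp only [hg, Set.mem_setOf_eq]
        refine ⟨?_, ?_, ?_⟩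
        · have := h1 x.1 x.2
          simpa only [hρb, dif_pos x.2] using this
        · have := h2 (x.1, true) (Finset.mem_product.2 ⟨x.2, Finset.mem_univ _⟩)
          simpa only [hgm, hcv, if_true, hρb, dif_pos x.2] using this
        · have := h2 (x.1, false) (Finset.mem_product.2 ⟨x.2, Finset.mem_univ _⟩)
          simpa only [hgm, hcv, if_false, Bool.false_eq_true, hρb, dif_pos x.2] using this
    have hinj : Set.InjOn gm ↑(S ×ˢ (Finset.univ : Finset Bool)) := by
      rintro ⟨e, m⟩ hk ⟨e', m'⟩ hk' heq
      by_cases hee : e = e'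
      · subst hee
        cases m <;> cases m'
        · rfl
        · exfalso
          simp only [hgm, if_true, if_false, Bool.false_eq_true] at heq
          exact hne _ e heq.symm
        · exfalso
          simp only [hgm, if_true, if_false, Bool.false_eq_true] at heq
          exact hne _ e heq
        · rfl
      · exfalso
        obtain ⟨hs1, hs2, hs3, hs4⟩ := hsep (ρb e).1 (ρb e').1 e e' hee
        cases m <;> cases m' <;>
          simp only [hgm, if_true, if_false, Bool.false_eq_true] at heq
        · exact hs4 heq
        · exact hs3 heq
        · exact hs2 heq
        · exact hs1 heq
    rw [hrect, Measure.prod_prod, hc₁ S (fun e => (ρb e).1),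
      hasCyl_pin_inj hc₂ (S ×ˢ (Finset.univ : Finset Bool)) gm cv hinj,
      Finset.prod_product]
    have hbool : ∀ e ∈ S, (∏ m : Bool, wgt p (cv (e, m)))
        = wgt p (ρb e).2.1 * wgt p (ρb e).2.2 := by
      intro e _
      rw [Fintype.prod_bool]
      simp only [hcv, if_true, if_false, Bool.false_eq_true]
    rw [Finset.prod_congr rfl hbool, ← Finset.prod_mul_distrib]
    rw [← Finset.prod_attach S
      (fun e => wgt q (ρb e).1 * (wgt p (ρb e).2.1 * wgt p (ρb e).2.2))]
    refine Finset.prod_congr rfl fun x _ => ?_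
    simp only [hρb, dif_pos x.2]
  rw [Finset.sum_congr rfl hterm,
    ← Finset.prod_sum S T (fun e y => wgt q y.1 * (wgt p y.2.1 * wgt p y.2.2))]
  refine Finset.prod_congr rfl fun e he => ?_
  have hTe : T e = (Finset.univ : Finset Bool) ×ˢ
      (Finset.univ.filter (fun y : Bool × Bool => op y.1 y.2 = b e)) := by
    ext y
    simp only [hT, Finset.mem_filter, Finset.mem_univ, true_and, Finset.mem_product]
  rw [hTe, Finset.sum_product]
  have : ∀ c : Bool, (∑ y ∈ Finset.univ.filter (fun y : Bool × Bool => op y.1 y.2 = b e),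
      wgt q c * (wgt p y.1 * wgt p y.2)) = wgt q c * wgt r' (b e) := by
    intro c
    rw [← Finset.mul_sum, hop (b e)]
  rw [Fintype.sum_bool, this, this, ← add_mul, wgt_add, one_mul]
end Master

/-! ### concrete lifted-edge selectors -/

open scoped Classical in
noncomputable def edgeA (c : Bool) (e : Sym2 V) : Sym2 (V × Bool) :=
  if e.IsDiag then s((e.out.1, false), (e.out.1, false)) else s((e.out.1, false), (e.out.2, c))

open scoped Classical in
noncomputable def edgeB (c : Bool) (e : Sym2 V) : Sym2 (V × Bool) :=
  if e.IsDiag then s((e.out.1, true), (e.out.1, true)) else s((e.out.1, true), (e.out.2, !c))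

lemma sym2_mk_out (e : Sym2 V) : s(e.out.1, e.out.2) = e := by
  have h := Quot.out_eq e
  rw [← h]
  congr

lemma edgeA_proj (c : Bool) (e : Sym2 V) : Sym2.map Prod.fst (edgeA c e) = e := by
  rw [edgeA]
  by_cases h : e.IsDiag
  · rw [if_pos h, Sym2.map_pair_eq]
    have h2 : e.out.1 = e.out.2 := by
      have := h
      rw [← sym2_mk_out e, Sym2.mk_isDiag_iff] at this
      exact this
    show s(e.out.1, e.out.1) = e
    conv_rhs => rw [← sym2_mk_out e]
    rw [Sym2.eq_iff]
    exact Or.inl ⟨rfl, h2⟩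
  · rw [if_neg h, Sym2.map_pair_eq]
    exact sym2_mk_out e

lemma edgeB_proj (c : Bool) (e : Sym2 V) : Sym2.map Prod.fst (edgeB c e) = e := by
  rw [edgeB]
  by_cases h : e.IsDiag
  · rw [if_pos h, Sym2.map_pair_eq]
    have h2 : e.out.1 = e.out.2 := by
      have := h
      rw [← sym2_mk_out e, Sym2.mk_isDiag_iff] at this
      exact this
    show s(e.out.1, e.out.1) = e
    conv_rhs => rw [← sym2_mk_out e]
    rw [Sym2.eq_iff]
    exact Or.inl ⟨rfl, h2⟩
  · rw [if_neg h, Sym2.map_pair_eq]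
    exact sym2_mk_out e

lemma edgeA_ne_edgeB (c : Bool) (e : Sym2 V) : edgeA c e ≠ edgeB c e := by
  rw [edgeA, edgeB]
  by_cases h : e.IsDiag
  · rw [if_pos h, if_pos h]
    simp [Sym2.eq_iff]
  · rw [if_neg h, if_neg h]
    have hne : e.out.1 ≠ e.out.2 := by
      intro hcon
      apply h
      rw [← sym2_mk_out e, Sym2.mk_isDiag_iff]
      exact hcon
    intro hcon
    rcases Sym2.eq_iff.1 hcon with ⟨h1, _⟩ | ⟨h1, h2⟩
    · exact absurd (congrArg Prod.snd h1) (by simp)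
    · exact hne (congrArg Prod.fst h1)

lemma edge_sep (c c' : Bool) (e e' : Sym2 V) (h : e ≠ e') :
    edgeA c e ≠ edgeA c' e' ∧ edgeA c e ≠ edgeB c' e' ∧
      edgeB c e ≠ edgeA c' e' ∧ edgeB c e ≠ edgeB c' e' := by
  refine ⟨fun hc => h ?_, fun hc => h ?_, fun hc => h ?_, fun hc => h ?_⟩
  · rw [← edgeA_proj c e, ← edgeA_proj c' e', hc]
  · rw [← edgeA_proj c e, ← edgeB_proj c' e', hc]
  · rw [← edgeB_proj c e, ← edgeA_proj c' e', hc]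
  · rw [← edgeB_proj c e, ← edgeB_proj c' e', hc]

lemma edge_mem_pair {u v : V} (huv : u ≠ v) (c i : Bool) :
    s((u, i), (v, xor c i)) = edgeA c s(u, v) ∨ s((u, i), (v, xor c i)) = edgeB c s(u, v) := by
  have hnd : ¬ (s(u, v) : Sym2 V).IsDiag := by
    rw [Sym2.mk_isDiag_iff]; exact huv
  have hout : s((s(u,v) : Sym2 V).out.1, (s(u,v) : Sym2 V).out.2) = s(u, v) := sym2_mk_out _
  rw [edgeA, edgeB, if_neg hnd, if_neg hnd]
  rcases Sym2.eq_iff.1 hout with ⟨h1, h2⟩ | ⟨h1, h2⟩ <;> rw [h1, h2] <;>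
    cases c <;> cases i <;>
      first
        | exact Or.inl rfl
        | exact Or.inr rfl
        | exact Or.inl Sym2.eq_swap
        | exact Or.inr Sym2.eq_swap

/-! ### geometry -/

section Geometry
variable (G : SimpleGraph V) (o : V) (η : Sym2 V → Bool) (ω : Sym2 (V × Bool) → Bool)

lemma step_and {u v : V}
    (h : (openSubgraph G (liftMap edgeA edgeB (· && ·) (η, ω))).Adj u v) (i : Bool) :
    (openSubgraph (twoLift G η) ω).Adj (u, i) (v, xor (η s(u, v)) i) := by
  obtain ⟨hG, hopen⟩ := h
  have hval : (ω (edgeA (η s(u, v)) s(u, v)) && ω (edgeB (η s(u, v)) s(u, v))) = true := hopen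
  rw [Bool.and_eq_true] at hval
  refine ⟨⟨hG, rfl⟩, ?_⟩
  rcases edge_mem_pair (G.ne_of_adj hG) (η s(u, v)) i with h | h
  · rw [h]; exact hval.1
  · rw [h]; exact hval.2

lemma reach_lift {y : V}
    (h : (openSubgraph G (liftMap edgeA edgeB (· && ·) (η, ω))).Reachable o y) :
    ∃ i, (openSubgraph (twoLift G η) ω).Reachable (o, false) (y, i) := by
  obtain ⟨w⟩ := h
  have key : ∀ (u y' : V) (_ : (openSubgraph G (liftMap edgeA edgeB (· && ·) (η, ω))).Walk u y'),
      (∃ i, (openSubgraph (twoLift G η) ω).Reachable (o, false) (u, i)) →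
        ∃ j, (openSubgraph (twoLift G η) ω).Reachable (o, false) (y', j) := by
    intro u y' w
    induction w with
    | nil => exact id
    | @cons a b c hadj p ih =>
      rintro ⟨i, hi⟩
      exact ih ⟨xor (η s(a, b)) i, hi.trans (step_and G η ω hadj i).reachable⟩
  exact key o y w ⟨false, SimpleGraph.Reachable.refl _⟩

lemma infinite_lift
    (h : (percCluster G (liftMap edgeA edgeB (· && ·) (η, ω)) o).Infinite) :
    (percCluster (twoLift G η) ω (o, false)).Infinite := by
  have hsub : percCluster G (liftMap edgeA edgeB (· && ·) (η, ω)) o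
      ⊆ Prod.fst '' percCluster (twoLift G η) ω (o, false) := by
    intro y hy
    obtain ⟨i, hi⟩ := reach_lift G o η ω hy
    exact ⟨(y, i), hi, rfl⟩
  exact Set.Infinite.of_image _ (h.mono hsub)

lemma step_or {x y : V × Bool}
    (h : (openSubgraph (twoLift G η) ω).Adj x y) :
    (openSubgraph G (liftMap edgeA edgeB (· || ·) (η, ω))).Adj x.1 y.1 := by
  obtain ⟨⟨hG, hj⟩, hopen⟩ := h
  refine ⟨hG, ?_⟩
  show (ω (edgeA (η s(x.1, y.1)) s(x.1, y.1)) || ω (edgeB (η s(x.1, y.1)) s(x.1, y.1))) = true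
  have hy : y = (y.1, xor (η s(x.1, y.1)) x.2) := by
    rw [← hj]
  have hx : x = (x.1, x.2) := rfl
  rw [Bool.or_eq_true]
  rcases edge_mem_pair (G.ne_of_adj hG) (η s(x.1, y.1)) x.2 with h | h
  · left
    rw [← h]
    rw [hx, hy] at hopen
    exact hopen
  · right
    rw [← h]
    rw [hx, hy] at hopen
    exact hopen

lemma reach_proj {x : V × Bool}
    (h : (openSubgraph (twoLift G η) ω).Reachable (o, false) x) :
    (openSubgraph G (liftMap edgeA edgeB (· || ·) (η, ω))).Reachable o x.1 := by
  obtain ⟨w⟩ := h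
  have key : ∀ (a b : V × Bool) (_ : (openSubgraph (twoLift G η) ω).Walk a b),
      (openSubgraph G (liftMap edgeA edgeB (· || ·) (η, ω))).Reachable o a.1 →
        (openSubgraph G (liftMap edgeA edgeB (· || ·) (η, ω))).Reachable o b.1 := by
    intro a b w
    induction w with
    | nil => exact id
    | @cons a' b' c' hadj p ih =>
      intro ha
      exact ih (ha.trans (step_or G η ω hadj).reachable)
  exact key (o, false) x w (SimpleGraph.Reachable.refl _)

lemma infinite_proj
    (h : (percCluster (twoLift G η) ω (o, false)).Infinite) :
    (percCluster G (liftMap edgeA edgeB (· || ·) (η, ω)) o).Infinite := by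
  by_contra hfin
  rw [Set.not_infinite] at hfin
  have hsub : percCluster (twoLift G η) ω (o, false)
      ⊆ (percCluster G (liftMap edgeA edgeB (· || ·) (η, ω)) o) ×ˢ (Set.univ : Set Bool) := by
    intro x hx
    exact ⟨reach_proj G o η ω hx, trivial⟩
  exact (hfin.prod Set.finite_univ).not_infinite (h.mono hsub)

end Geometry

/-! ### countability of V -/

lemma countable_of_connected (G : SimpleGraph V) (o : V) (hconn : G.Connected)
    (hlf : ∀ v : V, (G.neighborSet v).Finite) : Countable V := by
  classical
  let nb : V → ℕ → V := fun v n => ((hlf v).toFinset.toList.getD n v)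
  let f : List ℕ → V := fun l => l.foldr (fun n w => nb w n) o
  have hsurj : Function.Surjective f := by
    intro v
    obtain ⟨w⟩ := hconn.preconnected o v
    have key : ∀ (u v' : V) (_ : G.Walk u v'), (∃ l, f l = u) → ∃ l, f l = v' := by
      intro u v' w
      induction w with
      | nil => exact id
      | @cons a b c hadj p ih =>
        rintro ⟨l, hl⟩
        have hmem : b ∈ (hlf a).toFinset.toList := by
          rw [Finset.mem_toList, Set.Finite.mem_toFinset]
          exact hadj
        obtain ⟨n, hn⟩ := List.mem_iff_get.1 hmem
        refine ih ⟨n.val :: l, ?_⟩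
        show nb (f l) n.val = b
        rw [hl]
        show ((hlf a).toFinset.toList.getD n.val a) = b
        rw [List.getD_eq_get _ _ n, hn]
    exact key o v w ⟨[], rfl⟩
  exact hsurj.countable

/-! ### measurability of the infinite-cluster event -/

lemma openSubgraph_le (G : SimpleGraph V) (ω : Sym2 V → Bool) : openSubgraph G ω ≤ G := by
  intro a b h
  exact h.1

lemma mem_open_edgeSet (G : SimpleGraph V) (ω : Sym2 V → Bool) (e : Sym2 V)
    (h1 : e ∈ G.edgeSet) (h2 : ω e = true) : e ∈ (openSubgraph G ω).edgeSet := by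
  induction e using Sym2.ind with
  | _ a b =>
    rw [SimpleGraph.mem_edgeSet] at h1 ⊢
    exact ⟨h1, h2⟩

lemma open_edge_val (G : SimpleGraph V) (ω : Sym2 V → Bool) (e : Sym2 V)
    (h : e ∈ (openSubgraph G ω).edgeSet) : ω e = true := by
  induction e using Sym2.ind with
  | _ a b => exact h.2

lemma measurableSet_infCluster (G : SimpleGraph V) (o : V) [Countable V] :
    MeasurableSet {ω : Sym2 V → Bool | (percCluster G ω o).Infinite} := by
  classical
  have hreach : ∀ y : V, {ω : Sym2 V → Bool | (openSubgraph G ω).Reachable o y}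
      = ⋃ (w : G.Walk o y), {ω : Sym2 V → Bool | ∀ e ∈ w.edges, ω e = true} := by
    intro y
    ext ω
    simp only [Set.mem_setOf_eq, Set.mem_iUnion]
    constructor
    · rintro ⟨p⟩
      have hG : ∀ e ∈ p.edges, e ∈ G.edgeSet := fun e he =>
        SimpleGraph.edgeSet_mono (openSubgraph_le G ω) (p.edges_subset_edgeSet he)
      refine ⟨p.transfer G hG, fun e he => ?_⟩
      rw [p.edges_transfer hG] at he
      exact open_edge_val G ω e (p.edges_subset_edgeSet he)
    · rintro ⟨w, hw⟩
      have h : ∀ e ∈ w.edges, e ∈ (openSubgraph G ω).edgeSet := fun e he =>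
        mem_open_edgeSet G ω e (w.edges_subset_edgeSet he) (hw e he)
      exact (w.transfer _ h).reachable
  haveI : ∀ y : V, Countable (G.Walk o y) :=
    fun y => SimpleGraph.Walk.edges_injective.countable
  have hms_reach : ∀ y : V,
      MeasurableSet {ω : Sym2 V → Bool | (openSubgraph G ω).Reachable o y} := by
    intro y
    rw [hreach y]
    refine MeasurableSet.iUnion fun w => ?_
    have : {ω : Sym2 V → Bool | ∀ e ∈ w.edges, ω e = true}
        = ⋂ e ∈ {e : Sym2 V | e ∈ w.edges}, (fun ω : Sym2 V → Bool => ω e) ⁻¹' {true} := by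
      ext ω; simp
    rw [this]
    exact MeasurableSet.biInter (w.edges.finite_toSet.countable)
      (fun e _ => measurable_pi_apply e (measurableSet_singleton _))
  have hcompl : {ω : Sym2 V → Bool | (percCluster G ω o).Infinite}
      = (⋃ (S : Finset V), ⋂ y ∈ (↑S : Set V)ᶜ,
          {ω : Sym2 V → Bool | (openSubgraph G ω).Reachable o y}ᶜ)ᶜ := by
    ext ω
    constructor
    · intro hinf hmem
      rcases Set.mem_iUnion.1 hmem with ⟨S, hS⟩
      have hsub : percCluster G ω o ⊆ ↑S := by
        intro y hy
        by_contra hyS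
        exact (Set.mem_iInter₂.1 hS y hyS) hy
      exact (S.finite_toSet.subset hsub).not_infinite hinf
    · intro hmem
      by_contra hinf
      rw [Set.mem_setOf_eq, Set.not_infinite] at hinf
      apply hmem
      refine Set.mem_iUnion.2 ⟨hinf.toFinset, Set.mem_iInter₂.2 fun y hy => ?_⟩
      intro hreach
      exact hy (by simpa using hinf.mem_toFinset.2 hreach)
  rw [hcompl]
  refine MeasurableSet.compl (MeasurableSet.iUnion fun S => ?_)
  exact MeasurableSet.biInter (Set.to_countable _) (fun y _ => (hms_reach y).compl)

/-- **Proposition.** For every `(p,q) ∈ (0,1)²`,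
`θ_G(p²) ≤ θ(p,q) ≤ θ_G(1 - (1-p)²)`. -/
theorem theta_sandwich {V : Type*} (G : SimpleGraph V) (o : V)
    (hinf : Infinite V) (hconn : G.Connected)
    (hlf : ∀ v : V, (G.neighborSet v).Finite)
    (p q : ℝ) (hp : p ∈ Set.Ioo (0 : ℝ) 1) (hq : q ∈ Set.Ioo (0 : ℝ) 1) :
    graphThetaAt G o (p ^ 2) ≤ annealedTheta G o p q ∧
      annealedTheta G o p q ≤ graphThetaAt G o (1 - (1 - p) ^ 2) := by
  classical
  obtain ⟨hp0, hp1⟩ := hp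
  obtain ⟨hq0, hq1⟩ := hq
  haveI : Infinite V := hinf
  haveI : Countable V := countable_of_connected G o hconn hlf
  haveI : Infinite (Sym2 V) :=
    Infinite.of_injective (fun v : V => s(v, v))
      (fun a b h => by simpa [Sym2.eq_iff] using h)
  haveI : Infinite (Sym2 (V × Bool)) :=
    Infinite.of_injective (fun x : V × Bool => s(x, x))
      (fun a b h => by simpa [Sym2.eq_iff] using h)
  have hF_and : Measurable (liftMap (edgeA (V := V)) edgeB (· && ·)) :=
    measurable_liftMap _ _ _
  have hF_or : Measurable (liftMap (edgeA (V := V)) edgeB (· || ·)) :=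
    measurable_liftMap _ _ _
  have hBE : MeasurableSet {ω : Sym2 V → Bool | (percCluster G ω o).Infinite} :=
    measurableSet_infCluster G o
  have hincl_and : liftMap (edgeA (V := V)) edgeB (· && ·)
      ⁻¹' {ω : Sym2 V → Bool | (percCluster G ω o).Infinite}
      ⊆ {z : (Sym2 V → Bool) × (Sym2 (V × Bool) → Bool) |
          (percCluster (twoLift G z.1) z.2 (o, false)).Infinite} := by
    rintro ⟨η, ω⟩ hz
    exact infinite_lift G o η ω hz
  have hincl_or : {z : (Sym2 V → Bool) × (Sym2 (V × Bool) → Bool) |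
        (percCluster (twoLift G z.1) z.2 (o, false)).Infinite}
      ⊆ liftMap (edgeA (V := V)) edgeB (· || ·)
        ⁻¹' {ω : Sym2 V → Bool | (percCluster G ω o).Infinite} := by
    rintro ⟨η, ω⟩ hz
    exact infinite_proj G o η ω hz
  constructor
  · rw [graphThetaAt, annealedTheta]
    refine Real.sSup_le ?_ (Real.sSup_nonneg ?_)
    · rintro t ⟨μ₀, hμ₀, rfl⟩
      obtain ⟨ν₁, hν₁⟩ := exists_isBernoulliFamily (Sym2 V) hq0 hq1
      obtain ⟨ν₂, hν₂⟩ := exists_isBernoulliFamily (Sym2 (V × Bool)) hp0 hp1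
      haveI := hν₁.1
      haveI := hν₂.1
      have hpush : IsBernoulliFamily
          ((ν₁.prod ν₂).map (liftMap edgeA edgeB (· && ·))) (p ^ 2) :=
        isBernoulliFamily_liftMap hν₁ hν₂ edgeA edgeB (· && ·) edgeA_ne_edgeB edge_sep
          (hop_of_true _ (hop_and hp0.le hp1.le))
      have hμeq : μ₀ = (ν₁.prod ν₂).map (liftMap edgeA edgeB (· && ·)) := by
        haveI := hμ₀.1
        haveI := hpush.1
        exact hasCyl_unique hμ₀.hasCyl hpush.hasCyl
      have hle : (μ₀ {ω : Sym2 V → Bool | (percCluster G ω o).Infinite}).toReal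
          ≤ ((ν₁.prod ν₂) {z : (Sym2 V → Bool) × (Sym2 (V × Bool) → Bool) |
              (percCluster (twoLift G z.1) z.2 (o, false)).Infinite}).toReal := by
        rw [hμeq, Measure.map_apply hF_and hBE]
        exact ENNReal.toReal_mono (measure_ne_top _ _) (measure_mono hincl_and)
      refine hle.trans (le_csSup ?_ ?_)
      · refine ⟨1, ?_⟩
        rintro s ⟨μ, hμ, rfl⟩
        obtain ⟨m₁, m₂, hm₁, hm₂, rfl⟩ := hμ
        haveI := hm₁.1
        haveI := hm₂.1
        calc ((m₁.prod m₂) _).toReal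
            ≤ ((m₁.prod m₂) Set.univ).toReal :=
              ENNReal.toReal_mono (measure_ne_top _ _) (measure_mono (Set.subset_univ _))
          _ = 1 := by rw [measure_univ, ENNReal.toReal_one]
      · exact ⟨ν₁.prod ν₂, ⟨ν₁, ν₂, hν₁, hν₂, rfl⟩, rfl⟩
    · rintro t ⟨μ, _, rfl⟩
      exact ENNReal.toReal_nonneg
  · rw [graphThetaAt, annealedTheta]
    refine Real.sSup_le ?_ (Real.sSup_nonneg ?_)
    · rintro t ⟨μ, hμ, rfl⟩
      obtain ⟨ν₁, ν₂, hν₁, hν₂, rfl⟩ := hμ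
      haveI := hν₁.1
      haveI := hν₂.1
      have hpush : IsBernoulliFamily
          ((ν₁.prod ν₂).map (liftMap edgeA edgeB (· || ·))) (1 - (1 - p) ^ 2) :=
        isBernoulliFamily_liftMap hν₁ hν₂ edgeA edgeB (· || ·) edgeA_ne_edgeB edge_sep
          (hop_of_true _ (hop_or hp0.le hp1.le))
      have hle : ((ν₁.prod ν₂) {z : (Sym2 V → Bool) × (Sym2 (V × Bool) → Bool) |
            (percCluster (twoLift G z.1) z.2 (o, false)).Infinite}).toReal
          ≤ (((ν₁.prod ν₂).map (liftMap edgeA edgeB (· || ·)))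
              {ω : Sym2 V → Bool | (percCluster G ω o).Infinite}).toReal := by
        rw [Measure.map_apply hF_or hBE]
        exact ENNReal.toReal_mono (measure_ne_top _ _) (measure_mono hincl_or)
      refine hle.trans (le_csSup ?_ ?_)
      · refine ⟨1, ?_⟩
        rintro s ⟨μ', hμ', rfl⟩
        haveI := hμ'.1
        calc (μ' _).toReal
            ≤ (μ' Set.univ).toReal :=
              ENNReal.toReal_mono (measure_ne_top _ _) (measure_mono (Set.subset_univ _))
          _ = 1 := by rw [measure_univ, ENNReal.toReal_one]
      · exact ⟨_, hpush, rfl⟩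
    · rintro t ⟨μ, _, rfl⟩
      exact ENNReal.toReal_nonneg
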